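/- Let R ⊂ ℤ^d be finite with 0 not in the convex hull of R, and let B be a β-recovering cocycle (β < ∞). For the Markov chain Q_u with transitions p(z)e^{-βB(x,x+z)-βV(x,z)}, and x, y with y-x and x-u in the semigroup generated by R, Q_u(X hits x before y and τ_y < ∞, and X_{τ_x:τ_y} = x_{j:k}) equals Q_u(τ_x ≤ τ_y < ∞) times Q^{unr}_{x,y}(X_{0:τ_y} = x_{j:k}), where Q^{unr}_{x,y} is the unrestricted-length point-to-point polymer measure with density e^{-βΣ_{i<τ_y}V(X_i, X_{i+1}-X_i)}1{τ_y<∞} / Z(x→y) with respect to the reference walk started at x. -/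

import Mathlib

open Finset

attribute [local instance] Classical.propDecidable

noncomputable section

/-- Position of an admissible path after `k` steps. -/
def pos {d n : ℕ} (x : Fin d → ℤ) (s : Fin n → (Fin d → ℤ)) (k : ℕ) : Fin d → ℤ :=
  x + ∑ i ∈ Finset.univ.filter (fun i : Fin n => (i : ℕ) < k), s i

/-- Weight of a path: product of kernel factors and Boltzmann factors for the potential. -/
def pathWeight {d n : ℕ} (p : (Fin d → ℤ) → ℝ) (β : ℝ)
    (V : (Fin d → ℤ) → (Fin d → ℤ) → ℝ) (x : Fin d → ℤ)
    (s : Fin n → (Fin d → ℤ)) : ℝ :=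
  ∏ i : Fin n, p (s i) * Real.exp (-β * V (pos x s (i : ℕ)) (s i))

/-- Weight of a path under the cocycle Markov chain. -/
def chainWeight {d n : ℕ} (p : (Fin d → ℤ) → ℝ) (β : ℝ)
    (V B : (Fin d → ℤ) → (Fin d → ℤ) → ℝ) (x : Fin d → ℤ)
    (s : Fin n → (Fin d → ℤ)) : ℝ :=
  ∏ i : Fin n, p (s i) *
    Real.exp (-β * B (pos x s (i : ℕ)) (pos x s ((i : ℕ) + 1)) - β * V (pos x s (i : ℕ)) (s i))

/-- Total weight of the length-`n` admissible paths from `x` first hitting `y` at step `n`. -/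
def firstHitZ {d : ℕ} (R : Finset (Fin d → ℤ)) (p : (Fin d → ℤ) → ℝ) (β : ℝ)
    (V : (Fin d → ℤ) → (Fin d → ℤ) → ℝ) (x y : Fin d → ℤ) (n : ℕ) : ℝ :=
  ∑ s ∈ Fintype.piFinset (fun _ : Fin n => R),
    if pos x s n = y ∧ ∀ k < n, pos x s k ≠ y then pathWeight p β V x s else 0

/-- Unrestricted-length point-to-point partition function `Z(x → y)`. -/
def Zunr {d : ℕ} (R : Finset (Fin d → ℤ)) (p : (Fin d → ℤ) → ℝ) (β : ℝ)
    (V : (Fin d → ℤ) → (Fin d → ℤ) → ℝ) (x y : Fin d → ℤ) : ℝ :=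
  ∑' n : ℕ, firstHitZ R p β V x y n

/-- Chain measure of the event `{τ_x ≤ τ_y < ∞}`: sum over `n` and over paths from `u` which
first hit `y` at time `n` and have visited `x` by then. -/
def QhitBoth {d : ℕ} (R : Finset (Fin d → ℤ)) (p : (Fin d → ℤ) → ℝ) (β : ℝ)
    (V B : (Fin d → ℤ) → (Fin d → ℤ) → ℝ) (u x y : Fin d → ℤ) : ℝ :=
  ∑' n : ℕ, ∑ s ∈ Fintype.piFinset (fun _ : Fin n => R),
    if pos u s n = y ∧ (∀ m < n, pos u s m ≠ y) ∧ ∃ m ≤ n, pos u s m = x then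
      chainWeight p β V B u s
    else 0

/-- Chain measure of the event `{τ_x ≤ τ_y < ∞, X_{τ_x : τ_y} = ξ}`, where `ξ` is a fixed
admissible path from `x` to `y` of length `L` that first reaches `y` at its last step. -/
def QhitSeg {d : ℕ} (R : Finset (Fin d → ℤ)) (p : (Fin d → ℤ) → ℝ) (β : ℝ)
    (V B : (Fin d → ℤ) → (Fin d → ℤ) → ℝ) (u x y : Fin d → ℤ)
    (L : ℕ) (ξ : ℕ → Fin d → ℤ) : ℝ :=
  ∑' n : ℕ, ∑ s ∈ Fintype.piFinset (fun _ : Fin n => R),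
    if pos u s n = y ∧ (∀ m < n, pos u s m ≠ y) ∧
        ∃ jj, jj + L = n ∧ pos u s jj = x ∧ (∀ m < jj, pos u s m ≠ x) ∧
          ∀ i ≤ L, pos u s (jj + i) = ξ i then
      chainWeight p β V B u s
    else 0

/-!
Both sides are computed by cutting paths at the first visit `τ_x` to `x`. Writing `F_j` for the
chain weight of `{τ_x = j < τ_y}` (walk from `u`), the strong Markov property at `τ_x` gives
`Q_u(τ_x ≤ τ_y < ∞) = (∑ⱼ F_j) · Q_x(τ_y < ∞)` and
`Q_u(τ_x ≤ τ_y < ∞, X_{τ_x:τ_y} = ξ) = (∑ⱼ F_j) · Q_x(X_{0:L} = ξ)`.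
Because `B` is a cocycle, the chain weight of any path from `x` to `y` is `e^{-βB(x,y)}` times its
polymer weight, so `Q_x(τ_y < ∞) = e^{-βB(x,y)} Z(x → y)` and `Q_x(X_{0:L} = ξ)` is `e^{-βB(x,y)}`
times the weight of `ξ`; the common factor cancels in the ratio. The recovery identity makes the
chain a probability kernel, which provides the summability behind the Cauchy product, and
`Z(x → y) > 0` because `ξ` itself contributes to it.
-/

lemma Nat.forall_lt_add_iff {P : ℕ → Prop} {j k : ℕ} :
    (∀ m < j + k, P m) ↔ (∀ m < j, P m) ∧ ∀ m < k, P (j + m) :=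
  ⟨fun h => ⟨fun m hm => h m (by omega), fun m hm => h (j + m) (by omega)⟩,
    fun h m hm => (lt_or_ge m j).elim (h.1 m) fun hjm => by
      obtain ⟨i, rfl⟩ := Nat.exists_eq_add_of_le hjm
      exact h.2 i (by omega)⟩

lemma ite_and_exists_le_eq_sum_range {M : Type*} [AddCommMonoid M] (C : Prop) [Decidable C]
    (P : ℕ → Prop) [DecidablePred P] (n : ℕ) (c : M) :
    (if C ∧ ∃ m ≤ n, P m then c else 0)
      = ∑ j ∈ range (n + 1), if C ∧ P j ∧ ∀ m < j, ¬ P m then c else 0 := by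
  by_cases hP : ∃ m ≤ n, P m
  · have hex : ∃ m, P m := hP.imp fun _ h => h.2
    have hfind : Nat.find hex ≤ n := hP.elim fun m hm => (Nat.find_min' hex hm.2).trans hm.1
    simp only [← Nat.find_eq_iff hex, hP, and_true]
    by_cases hC : C <;> simp [hC, hfind]
  · rw [if_neg fun h => hP h.2]
    refine (sum_eq_zero fun j hj => if_neg fun h => hP ⟨j, ?_, h.2.1⟩).symm
    exact Nat.lt_succ_iff.1 (mem_range.1 hj)

lemma sum_piFinset_cons {α M : Type*} [AddCommMonoid M] (S : Finset α) {n : ℕ}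
    (f : (Fin (n + 1) → α) → M) :
    ∑ s ∈ Fintype.piFinset (fun _ => S), f s
      = ∑ z ∈ S, ∑ t ∈ Fintype.piFinset (fun _ : Fin n => S), f (Fin.cons z t) := by
  rw [← sum_product']
  refine (sum_equiv (Fin.consEquiv fun _ => α) (fun zt => ?_) (fun _ _ => rfl)).symm
  simp [Fin.consEquiv, Fin.forall_fin_succ]

lemma sum_piFinset_append {α M : Type*} [AddCommMonoid M] (S : Finset α) {j k : ℕ}
    (f : (Fin (j + k) → α) → M) :
    ∑ s ∈ Fintype.piFinset (fun _ => S), f s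
      = ∑ a ∈ Fintype.piFinset (fun _ : Fin j => S),
          ∑ b ∈ Fintype.piFinset (fun _ : Fin k => S), f (Fin.append a b) := by
  rw [← sum_product']
  refine (sum_equiv (Fin.appendEquiv j k) (fun ab => ?_) (fun _ _ => rfl)).symm
  simp [Fin.forall_fin_add]

section Paths

variable {d : ℕ}

lemma pos_zero (x : Fin d → ℤ) {n : ℕ} (s : Fin n → Fin d → ℤ) : pos x s 0 = x := by
  simp [pos]

lemma pos_succ (x : Fin d → ℤ) {n : ℕ} (s : Fin n → Fin d → ℤ) {k : ℕ} (hk : k < n) :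
    pos x s (k + 1) = pos x s k + s ⟨k, hk⟩ := by
  have hins : univ.filter (fun i : Fin n => (i : ℕ) < k + 1)
      = insert ⟨k, hk⟩ (univ.filter fun i : Fin n => (i : ℕ) < k) := by
    ext i
    simp [Fin.ext_iff]
    omega
  rw [pos, hins, sum_insert (by simp), pos]
  abel

lemma pos_cons (u z : Fin d → ℤ) {n : ℕ} (t : Fin n → Fin d → ℤ) (m : ℕ) :
    pos u (Fin.cons z t) (m + 1) = pos (u + z) t m := by
  simp [pos, sum_filter, Fin.sum_univ_succ, add_assoc]

lemma pos_append_left (u : Fin d → ℤ) {j k : ℕ} (a : Fin j → Fin d → ℤ)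
    (b : Fin k → Fin d → ℤ) {m : ℕ} (hm : m ≤ j) : pos u (Fin.append a b) m = pos u a m := by
  induction m with
  | zero => simp only [pos_zero]
  | succ m ih =>
    rw [pos_succ _ _ (by omega), pos_succ _ _ (by omega), ih (by omega)]
    exact congrArg _ (Fin.append_left a b ⟨m, by omega⟩)

lemma pos_append_right (u : Fin d → ℤ) {j k : ℕ} (a : Fin j → Fin d → ℤ)
    (b : Fin k → Fin d → ℤ) {m : ℕ} (hm : m ≤ k) :
    pos u (Fin.append a b) (j + m) = pos (pos u a j) b m := by
  induction m with
  | zero => simp only [add_zero, pos_zero, pos_append_left u a b le_rfl]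
  | succ m ih =>
    rw [← add_assoc, pos_succ _ _ (by omega), pos_succ _ _ (by omega), ih (by omega)]
    exact congrArg _ (Fin.append_right a b ⟨m, by omega⟩)

end Paths

section ChainWeight

variable {d : ℕ} {R : Finset (Fin d → ℤ)} (p : (Fin d → ℤ) → ℝ) (β : ℝ)
  (V B : (Fin d → ℤ) → (Fin d → ℤ) → ℝ)

lemma chainWeight_cons (u z : Fin d → ℤ) {n : ℕ} (t : Fin n → Fin d → ℤ) :
    chainWeight p β V B u (Fin.cons z t)
      = p z * Real.exp (-β * B u (u + z) - β * V u z) * chainWeight p β V B (u + z) t := by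
  simp only [chainWeight, Fin.prod_univ_succ, Fin.cons_zero, Fin.cons_succ, Fin.val_zero,
    Fin.val_succ, pos_cons, pos_zero]

lemma chainWeight_append (u : Fin d → ℤ) {j k : ℕ} (a : Fin j → Fin d → ℤ)
    (b : Fin k → Fin d → ℤ) :
    chainWeight p β V B u (Fin.append a b)
      = chainWeight p β V B u a * chainWeight p β V B (pos u a j) b := by
  rw [chainWeight, Fin.prod_univ_add]
  congr 1 <;> refine prod_congr rfl fun i _ => ?_
  · simp only [Fin.append_left, Fin.val_castAdd, pos_append_left u a b i.2.le,
      pos_append_left u a b i.2]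
  · simp only [Fin.append_right, Fin.val_natAdd, pos_append_right u a b i.2.le,
      add_assoc, pos_append_right u a b i.2]

lemma chainWeight_eq_exp_mul_pathWeight (hcoc : ∀ u x y : Fin d → ℤ, B u x + B x y = B u y)
    (u : Fin d → ℤ) {n : ℕ} (s : Fin n → Fin d → ℤ) :
    chainWeight p β V B u s = Real.exp (-β * B u (pos u s n)) * pathWeight p β V u s := by
  have hB : ∀ x y, B x y = B 0 y - B 0 x := fun x y => by linarith [hcoc 0 x y]
  have htel : ∑ i : Fin n, B (pos u s i) (pos u s (i + 1)) = B u (pos u s n) := by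
    rw [Fin.sum_univ_eq_sum_range (fun i => B (pos u s i) (pos u s (i + 1))), hB u]
    simp only [hB (pos u s _)]
    rw [sum_range_sub (fun i => B 0 (pos u s i)), pos_zero]
  rw [chainWeight, pathWeight, ← htel, mul_sum, Real.exp_sum, ← prod_mul_distrib]
  refine prod_congr rfl fun i _ => ?_
  rw [sub_eq_add_neg, Real.exp_add, neg_mul_eq_neg_mul]
  ring

variable {p}

lemma chainWeight_nonneg (hp : ∀ z ∈ R, 0 ≤ p z) (u : Fin d → ℤ) {n : ℕ}
    {s : Fin n → Fin d → ℤ} (hs : s ∈ Fintype.piFinset fun _ => R) :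
    0 ≤ chainWeight p β V B u s :=
  prod_nonneg fun i _ => mul_nonneg (hp _ (Fintype.mem_piFinset.1 hs i)) (Real.exp_pos _).le

end ChainWeight

section FirstPassage

variable {d : ℕ} (R : Finset (Fin d → ℤ)) (p : (Fin d → ℤ) → ℝ) (β : ℝ)
  (V B : (Fin d → ℤ) → (Fin d → ℤ) → ℝ)

def IsFirstPassage (A : Set (Fin d → ℤ)) (t u : Fin d → ℤ) {n : ℕ} (s : Fin n → Fin d → ℤ) :
    Prop :=
  pos u s n = t ∧ ∀ m < n, pos u s m ∉ A

/-- For `t ∈ A`, the chain weight of `{τ_A = n, X_n = t}` for the walk started at `u`. -/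
def firstPassageWeight (A : Set (Fin d → ℤ)) (t u : Fin d → ℤ) (n : ℕ) : ℝ :=
  ∑ s ∈ Fintype.piFinset (fun _ : Fin n => R),
    if IsFirstPassage A t u s then chainWeight p β V B u s else 0

variable (A : Set (Fin d → ℤ)) (t : Fin d → ℤ)

lemma firstPassageWeight_zero (u : Fin d → ℤ) :
    firstPassageWeight R p β V B A t u 0 = if u = t then 1 else 0 := by
  simp [firstPassageWeight, IsFirstPassage, Fintype.piFinset_of_isEmpty, pos_zero, chainWeight]

lemma firstPassageWeight_succ_of_mem {u : Fin d → ℤ} (hu : u ∈ A) (n : ℕ) :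
    firstPassageWeight R p β V B A t u (n + 1) = 0 :=
  sum_eq_zero fun s _ => if_neg fun h => h.2 0 n.succ_pos (by rwa [pos_zero])

lemma firstPassageWeight_succ {u : Fin d → ℤ} (hu : u ∉ A) (n : ℕ) :
    firstPassageWeight R p β V B A t u (n + 1)
      = ∑ z ∈ R, p z * Real.exp (-β * B u (u + z) - β * V u z)
          * firstPassageWeight R p β V B A t (u + z) n := by
  rw [firstPassageWeight, sum_piFinset_cons]
  refine sum_congr rfl fun z _ => ?_
  rw [firstPassageWeight, mul_sum]
  refine sum_congr rfl fun s _ => ?_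
  have hcond : IsFirstPassage A t u (Fin.cons z s) ↔ IsFirstPassage A t (u + z) s := by
    simp only [IsFirstPassage, Nat.forall_lt_succ_left, pos_zero, pos_cons, and_iff_right hu]
  rw [chainWeight_cons, mul_ite, mul_zero]
  exact if_congr hcond rfl rfl

variable {R p}

lemma firstPassageWeight_nonneg (hp : ∀ z ∈ R, 0 ≤ p z) (u : Fin d → ℤ) (n : ℕ) :
    0 ≤ firstPassageWeight R p β V B A t u n :=
  sum_nonneg fun _ hs => by
    split_ifs
    exacts [chainWeight_nonneg β V B hp u hs, le_rfl]

lemma sum_range_firstPassageWeight_le_one (hp : ∀ z ∈ R, 0 ≤ p z)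
    (hrec : ∀ x, ∑ z ∈ R, p z * Real.exp (-β * B x (x + z) - β * V x z) = 1)
    (ht : t ∈ A) (N : ℕ) (u : Fin d → ℤ) :
    ∑ n ∈ range N, firstPassageWeight R p β V B A t u n ≤ 1 := by
  induction N generalizing u with
  | zero => simp
  | succ N ih =>
    rw [sum_range_succ']
    by_cases hu : u ∈ A
    · simp only [firstPassageWeight_succ_of_mem R p β V B A t hu, sum_const_zero, zero_add,
        firstPassageWeight_zero]
      split_ifs <;> norm_num
    · have hut : u ≠ t := fun h => hu (h ▸ ht)
      simp only [firstPassageWeight_succ R p β V B A t hu, firstPassageWeight_zero, if_neg hut,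
        add_zero]
      rw [sum_comm, ← hrec u]
      refine sum_le_sum fun z hz => ?_
      rw [← mul_sum]
      exact mul_le_of_le_one_right (mul_nonneg (hp z hz) (Real.exp_pos _).le) (ih (u + z))

lemma summable_firstPassageWeight (hp : ∀ z ∈ R, 0 ≤ p z)
    (hrec : ∀ x, ∑ z ∈ R, p z * Real.exp (-β * B x (x + z) - β * V x z) = 1)
    (ht : t ∈ A) (u : Fin d → ℤ) :
    Summable (firstPassageWeight R p β V B A t u) :=
  summable_of_sum_range_le (firstPassageWeight_nonneg β V B A t hp u)
    (sum_range_firstPassageWeight_le_one β V B A t hp hrec ht · u)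

lemma chainWeight_le_firstPassageWeight (hp : ∀ z ∈ R, 0 ≤ p z) {u : Fin d → ℤ} {n : ℕ}
    {s : Fin n → Fin d → ℤ} (hs : s ∈ Fintype.piFinset fun _ => R)
    (hfirst : IsFirstPassage A t u s) :
    chainWeight p β V B u s ≤ firstPassageWeight R p β V B A t u n := by
  have hterm := single_le_sum (f := fun s => if IsFirstPassage A t u s then
    chainWeight p β V B u s else 0) (fun s' hs' => ?_) hs
  · rwa [if_pos hfirst] at hterm
  · split_ifs
    exacts [chainWeight_nonneg β V B hp u hs', le_rfl]

lemma firstPassageWeight_singleton (hcoc : ∀ u x y : Fin d → ℤ, B u x + B x y = B u y)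
    (x y : Fin d → ℤ) (n : ℕ) :
    firstPassageWeight R p β V B {y} y x n = Real.exp (-β * B x y) * firstHitZ R p β V x y n := by
  rw [firstPassageWeight, firstHitZ, mul_sum]
  refine sum_congr rfl fun s _ => ?_
  simp only [IsFirstPassage, Set.mem_singleton_iff, mul_ite, mul_zero]
  split_ifs with h
  · rw [chainWeight_eq_exp_mul_pathWeight p β V B hcoc, h.1]
  · rfl

lemma Zunr_eq_exp_mul_tsum_firstPassageWeight
    (hcoc : ∀ u x y : Fin d → ℤ, B u x + B x y = B u y) (x y : Fin d → ℤ) :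
    Zunr R p β V x y = Real.exp (β * B x y) * ∑' n, firstPassageWeight R p β V B {y} y x n := by
  rw [Zunr, ← tsum_mul_left]
  refine tsum_congr fun n => ?_
  rw [firstPassageWeight_singleton β V B hcoc, ← mul_assoc, ← Real.exp_add, neg_mul,
    add_neg_cancel, Real.exp_zero, one_mul]

end FirstPassage

section StrongMarkov

variable {d : ℕ} (R : Finset (Fin d → ℤ)) (p : (Fin d → ℤ) → ℝ) (β : ℝ)
  (V B : (Fin d → ℤ) → (Fin d → ℤ) → ℝ)

lemma sum_append_ite_and_eq_mul {j k : ℕ} (u x : Fin d → ℤ)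
    (Ca : (Fin j → Fin d → ℤ) → Prop) [DecidablePred Ca]
    (Cb : (Fin k → Fin d → ℤ) → Prop) [DecidablePred Cb] (hCa : ∀ a, Ca a → pos u a j = x) :
    ∑ a ∈ Fintype.piFinset (fun _ => R), ∑ b ∈ Fintype.piFinset (fun _ => R),
        (if Ca a ∧ Cb b then chainWeight p β V B u (Fin.append a b) else 0)
      = (∑ a ∈ Fintype.piFinset (fun _ => R), if Ca a then chainWeight p β V B u a else 0)
        * ∑ b ∈ Fintype.piFinset (fun _ => R), if Cb b then chainWeight p β V B x b else 0 := by
  rw [sum_mul_sum]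
  refine sum_congr rfl fun a _ => sum_congr rfl fun b _ => ?_
  rw [chainWeight_append]
  by_cases ha : Ca a
  · rw [hCa a ha]
    split_ifs <;> simp_all
  · simp [ha]

lemma firstVisit_append_iff (u x y : Fin d → ℤ) {j k : ℕ} (a : Fin j → Fin d → ℤ)
    (b : Fin k → Fin d → ℤ) :
    ((pos u (Fin.append a b) (j + k) = y ∧ ∀ m < j + k, pos u (Fin.append a b) m ≠ y) ∧
        pos u (Fin.append a b) j = x ∧ ∀ m < j, pos u (Fin.append a b) m ≠ x)
      ↔ IsFirstPassage {x, y} x u a ∧ IsFirstPassage {y} y x b := by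
  have hl : ∀ m < j, pos u (Fin.append a b) m = pos u a m :=
    fun m hm => pos_append_left u a b hm.le
  have hr : ∀ m ≤ k, pos u (Fin.append a b) (j + m) = pos (pos u a j) b m :=
    fun m hm => pos_append_right u a b hm
  simp only [IsFirstPassage, Nat.forall_lt_add_iff, Set.mem_insert_iff, Set.mem_singleton_iff,
    not_or, pos_append_left u a b le_rfl]
  constructor
  · rintro ⟨⟨hy, hya, hyb⟩, rfl, hx⟩
    refine ⟨⟨rfl, fun m hm => ?_⟩, by rwa [← hr k le_rfl], fun m hm => ?_⟩
    · rw [← hl m hm]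
      exact ⟨hx m hm, hya m hm⟩
    · rw [← hr m hm.le]
      exact hyb m hm
  · rintro ⟨⟨rfl, ha⟩, hy, hb⟩
    refine ⟨⟨by rwa [hr k le_rfl], fun m hm => ?_, fun m hm => ?_⟩, rfl, fun m hm => ?_⟩
    · rw [hl m hm]; exact (ha m hm).2
    · rw [hr m hm.le]; exact hb m hm
    · rw [hl m hm]; exact (ha m hm).1

/-- Strong Markov property at `τ_x`. -/
lemma sum_hitBoth_eq (u x y : Fin d → ℤ) (n : ℕ) :
    ∑ s ∈ Fintype.piFinset (fun _ : Fin n => R),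
        (if pos u s n = y ∧ (∀ m < n, pos u s m ≠ y) ∧ ∃ m ≤ n, pos u s m = x then
          chainWeight p β V B u s else 0)
      = ∑ j ∈ range (n + 1), firstPassageWeight R p β V B {x, y} x u j
          * firstPassageWeight R p β V B {y} y x (n - j) := by
  rw [sum_congr rfl fun s _ =>
    (if_congr and_assoc.symm rfl rfl).trans (ite_and_exists_le_eq_sum_range _ _ n _), sum_comm]
  refine sum_congr rfl fun j hj => ?_
  obtain ⟨k, rfl⟩ := Nat.exists_eq_add_of_le (mem_range_succ_iff.1 hj)
  rw [Nat.add_sub_cancel_left, sum_piFinset_append, sum_congr rfl fun a _ =>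
    sum_congr rfl fun b _ => if_congr (firstVisit_append_iff u x y a b) rfl rfl]
  exact sum_append_ite_and_eq_mul R p β V B u x (IsFirstPassage {x, y} x u)
    (IsFirstPassage {y} y x) fun _ ha => ha.1

variable {R p}

lemma QhitBoth_eq (hp : ∀ z ∈ R, 0 ≤ p z)
    (hrec : ∀ x, ∑ z ∈ R, p z * Real.exp (-β * B x (x + z) - β * V x z) = 1)
    (u x y : Fin d → ℤ) :
    QhitBoth R p β V B u x y = (∑' j, firstPassageWeight R p β V B {x, y} x u j)
      * ∑' k, firstPassageWeight R p β V B {y} y x k := by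
  have hsum : ∀ (A : Set (Fin d → ℤ)) t v, t ∈ A →
      Summable fun n => ‖firstPassageWeight R p β V B A t v n‖ := fun A t v ht =>
    summable_norm_iff.2 (summable_firstPassageWeight β V B A t hp hrec ht v)
  rw [tsum_mul_tsum_eq_tsum_sum_range_of_summable_norm (hsum {x, y} x u (by simp))
    (hsum {y} y x rfl)]
  exact tsum_congr (sum_hitBoth_eq R p β V B u x y)

end StrongMarkov

section FixedPath

variable {d : ℕ}

def pathSteps (ξ : ℕ → Fin d → ℤ) (L : ℕ) : Fin L → Fin d → ℤ := fun i => ξ (i + 1) - ξ i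

variable {x : Fin d → ℤ} {L : ℕ} {ξ : ℕ → Fin d → ℤ}

lemma pos_pathSteps (hξ0 : ξ 0 = x) {i : ℕ} (hi : i ≤ L) : pos x (pathSteps ξ L) i = ξ i := by
  induction i with
  | zero => rw [pos_zero, hξ0]
  | succ i ih =>
    rw [pos_succ _ _ (by omega), ih (by omega), pathSteps, add_sub_cancel]

lemma forall_pos_eq_iff_eq_pathSteps (hξ0 : ξ 0 = x) (b : Fin L → Fin d → ℤ) :
    (∀ i ≤ L, pos x b i = ξ i) ↔ b = pathSteps ξ L := by
  refine ⟨fun h => funext fun i => ?_, fun h i hi => h ▸ pos_pathSteps hξ0 hi⟩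
  rw [pathSteps, ← h _ i.2, ← h _ i.2.le, pos_succ x b i.2, add_sub_cancel_left]

lemma pathSteps_mem {R : Finset (Fin d → ℤ)} (hξstep : ∀ i < L, ξ (i + 1) - ξ i ∈ R) :
    pathSteps ξ L ∈ Fintype.piFinset fun _ => R :=
  Fintype.mem_piFinset.2 fun i => hξstep i i.2

lemma isFirstPassage_pathSteps {y : Fin d → ℤ} (hξ0 : ξ 0 = x) (hξL : ξ L = y)
    (hξfirst : ∀ i < L, ξ i ≠ y) : IsFirstPassage {y} y x (pathSteps ξ L) :=
  ⟨(pos_pathSteps hξ0 le_rfl).trans hξL, fun m hm => by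
    rw [pos_pathSteps hξ0 hm.le]; exact hξfirst m hm⟩

lemma pathWeight_pathSteps (p : (Fin d → ℤ) → ℝ) (β : ℝ) (V : (Fin d → ℤ) → (Fin d → ℤ) → ℝ)
    (hξ0 : ξ 0 = x) :
    pathWeight p β V x (pathSteps ξ L)
      = ∏ i ∈ range L, p (ξ (i + 1) - ξ i) * Real.exp (-β * V (ξ i) (ξ (i + 1) - ξ i)) := by
  rw [pathWeight, ← Fin.prod_univ_eq_prod_range]
  refine prod_congr rfl fun i _ => ?_
  rw [pos_pathSteps hξ0 i.2.le, pathSteps]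

end FixedPath

section HitSegment

variable {d : ℕ} {x y : Fin d → ℤ} {L : ℕ} {ξ : ℕ → Fin d → ℤ}

lemma hitSegment_append_iff (hξ0 : ξ 0 = x) (hξL : ξ L = y) (hξfirst : ∀ i < L, ξ i ≠ y)
    (u : Fin d → ℤ) {j : ℕ} (a : Fin j → Fin d → ℤ) (b : Fin L → Fin d → ℤ) :
    (pos u (Fin.append a b) (j + L) = y ∧ (∀ m < j + L, pos u (Fin.append a b) m ≠ y) ∧
        ∃ jj, jj + L = j + L ∧ pos u (Fin.append a b) jj = x ∧
          (∀ m < jj, pos u (Fin.append a b) m ≠ x) ∧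
          ∀ i ≤ L, pos u (Fin.append a b) (jj + i) = ξ i)
      ↔ IsFirstPassage {x, y} x u a ∧ b = pathSteps ξ L := by
  have hsegment : (∀ i ≤ L, pos u (Fin.append a b) (j + i) = ξ i)
      ↔ ∀ i ≤ L, pos (pos u a j) b i = ξ i :=
    forall₂_congr fun i hi => by rw [pos_append_right u a b hi]
  have hsplit := firstVisit_append_iff u x y a b
  simp only [add_left_inj, exists_eq_left, hsegment]
  constructor
  · rintro ⟨hy, hny, hx, hnx, hb⟩
    obtain ⟨ha, -⟩ := hsplit.1 ⟨⟨hy, hny⟩, hx, hnx⟩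
    rw [ha.1] at hb
    exact ⟨ha, (forall_pos_eq_iff_eq_pathSteps hξ0 b).1 hb⟩
  · rintro ⟨ha, rfl⟩
    obtain ⟨⟨hy, hny⟩, hx, hnx⟩ := hsplit.2 ⟨ha, isFirstPassage_pathSteps hξ0 hξL hξfirst⟩
    rw [ha.1]
    exact ⟨hy, hny, hx, hnx, fun i hi => pos_pathSteps hξ0 hi⟩

variable (R : Finset (Fin d → ℤ)) (p : (Fin d → ℤ) → ℝ) (β : ℝ)
  (V B : (Fin d → ℤ) → (Fin d → ℤ) → ℝ)

lemma QhitSeg_eq (hξ0 : ξ 0 = x) (hξL : ξ L = y) (hξstep : ∀ i < L, ξ (i + 1) - ξ i ∈ R)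
    (hξfirst : ∀ i < L, ξ i ≠ y) (u : Fin d → ℤ) :
    QhitSeg R p β V B u x y L ξ = (∑' j, firstPassageWeight R p β V B {x, y} x u j)
      * chainWeight p β V B x (pathSteps ξ L) := by
  rw [QhitSeg, ← (add_left_injective L).tsum_eq, ← tsum_mul_right]
  · refine tsum_congr fun j => ?_
    rw [sum_piFinset_append, sum_congr rfl fun a _ => sum_congr rfl fun b _ =>
      if_congr (hitSegment_append_iff hξ0 hξL hξfirst u a b) rfl rfl,
      sum_append_ite_and_eq_mul R p β V B u x (IsFirstPassage {x, y} x u) (· = pathSteps ξ L)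
        fun _ ha => ha.1, sum_ite_eq', if_pos (pathSteps_mem hξstep)]
    rfl
  · intro n hn
    refine ⟨n - L, Nat.sub_add_cancel ?_⟩
    by_contra hlt
    exact hn (sum_eq_zero fun s _ => if_neg fun h => hlt (h.2.2.elim fun jj h => by omega))

end HitSegment

theorem cocycle_chain_consistent_with_unrestricted_general {d : ℕ} (R : Finset (Fin d → ℤ))
    (p : (Fin d → ℤ) → ℝ)
    (hp : ∀ z ∈ R, 0 < p z ∧ p z ≤ 1)
    (β : ℝ)
    (V B : (Fin d → ℤ) → (Fin d → ℤ) → ℝ)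
    (hcoc : ∀ u x y : Fin d → ℤ, B u x + B x y = B u y)
    (hrec : ∀ x : Fin d → ℤ, ∑ z ∈ R, p z * Real.exp (-β * B x (x + z) - β * V x z) = 1)
    (u x y : Fin d → ℤ) (L : ℕ) (ξ : ℕ → Fin d → ℤ)
    (hξ0 : ξ 0 = x) (hξL : ξ L = y)
    (hξstep : ∀ i < L, ξ (i + 1) - ξ i ∈ R)
    (hξfirst : ∀ i < L, ξ i ≠ y) :
    QhitSeg R p β V B u x y L ξ
      = QhitBoth R p β V B u x y *
        ((∏ i ∈ Finset.range L, p (ξ (i + 1) - ξ i)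
            * Real.exp (-β * V (ξ i) (ξ (i + 1) - ξ i))) / Zunr R p β V x y) := by
  have hp0 : ∀ z ∈ R, 0 ≤ p z := fun z hz => (hp z hz).1.le
  have hPξ : 0 < ∏ i ∈ range L, p (ξ (i + 1) - ξ i) * Real.exp (-β * V (ξ i) (ξ (i + 1) - ξ i)) :=
    prod_pos fun i hi => mul_pos (hp _ (hξstep i (mem_range.1 hi))).1 (Real.exp_pos _)
  have hchain : chainWeight p β V B x (pathSteps ξ L) = (Real.exp (β * B x y))⁻¹
      * ∏ i ∈ range L, p (ξ (i + 1) - ξ i) * Real.exp (-β * V (ξ i) (ξ (i + 1) - ξ i)) := by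
    rw [chainWeight_eq_exp_mul_pathWeight p β V B hcoc, pos_pathSteps hξ0 le_rfl, hξL,
      pathWeight_pathSteps p β V hξ0, neg_mul, Real.exp_neg]
  have hZ : 0 < ∑' n, firstPassageWeight R p β V B {y} y x n :=
    calc 0 < chainWeight p β V B x (pathSteps ξ L) := by rw [hchain]; positivity
      _ ≤ firstPassageWeight R p β V B {y} y x L :=
        chainWeight_le_firstPassageWeight β V B _ _ hp0 (pathSteps_mem hξstep)
          (isFirstPassage_pathSteps hξ0 hξL hξfirst)
      _ ≤ _ := (summable_firstPassageWeight β V B {y} y hp0 hrec rfl x).le_tsum L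
          fun n _ => firstPassageWeight_nonneg β V B {y} y hp0 x n
  rw [QhitSeg_eq R p β V B hξ0 hξL hξstep hξfirst, QhitBoth_eq β V B hp0 hrec,
    Zunr_eq_exp_mul_tsum_firstPassageWeight β V B hcoc, hchain]
  field_simp

/-- Consistency with the unrestricted-length point-to-point polymer measures: for a
`β`-recovering cocycle `B` in the directed setting, for `u, x, y` and a path `ξ` from `x`
first reaching `y` at its last step,
`Q_u(τ_x ≤ τ_y < ∞, X_{τ_x:τ_y} = ξ) = Q_u(τ_x ≤ τ_y < ∞) · Q^{unr}_{x,y}(X_{0:τ_y} = ξ)`,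
where `Q^{unr}_{x,y}(X_{0:τ_y} = ξ)` is the path weight of `ξ` divided by `Z(x → y)`. -/
theorem cocycle_chain_consistent_with_unrestricted {d : ℕ} (R : Finset (Fin d → ℤ))
    (p : (Fin d → ℤ) → ℝ)
    (hp : ∀ z ∈ R, 0 < p z ∧ p z ≤ 1) (hpsum : ∑ z ∈ R, p z = 1)
    (β : ℝ) (hβ : 0 < β)
    (hnoLoop : (0 : Fin d → ℝ) ∉
      convexHull ℝ ((fun z : Fin d → ℤ => fun i => (z i : ℝ)) '' (R : Set (Fin d → ℤ))))
    (V B : (Fin d → ℤ) → (Fin d → ℤ) → ℝ)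
    (hcoc : ∀ u x y : Fin d → ℤ, B u x + B x y = B u y)
    (hrec : ∀ x : Fin d → ℤ, ∑ z ∈ R, p z * Real.exp (-β * B x (x + z) - β * V x z) = 1)
    (u x y : Fin d → ℤ) (L : ℕ) (ξ : ℕ → Fin d → ℤ)
    (hξ0 : ξ 0 = x) (hξL : ξ L = y)
    (hξstep : ∀ i < L, ξ (i + 1) - ξ i ∈ R)
    (hξfirst : ∀ i < L, ξ i ≠ y) :
    QhitSeg R p β V B u x y L ξ
      = QhitBoth R p β V B u x y *
        ((∏ i ∈ Finset.range L, p (ξ (i + 1) - ξ i)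
            * Real.exp (-β * V (ξ i) (ξ (i + 1) - ξ i))) / Zunr R p β V x y) :=
  cocycle_chain_consistent_with_unrestricted_general R p hp β V B hcoc hrec u x y L ξ hξ0 hξL hξstep
    hξfirst

end
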